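/- Let T, T' be non-crossing spanning trees on linearly ordered points p_1,...,p_n such that the set of pairs Π_R is empty, and let g_j be a near-near gap having no incoming edge in the conflict graph H(T,T'). Then flipping e_j = ρ_T(g_j) directly to e'_j = ρ_{T'}(g_j) is valid: (T - e_j) + e'_j is a non-crossing spanning tree in which every other edge retains its associated gap and its type (short/near/far). -/

import Mathlib

/- Non-crossing spanning trees on linearly ordered points p_0, ..., p_{n-1}.
An edge is a pair (a, b) of indices with a < b < n.
Gap k (for k + 1 < n) lies between points k and k+1. -/

namespace NCST

attribute [local instance] Classical.propDecidable

abbrev Edge := ℕ × ℕ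

/-- `e` covers `f`. -/
def covers (e f : Edge) : Prop := e.1 ≤ f.1 ∧ f.2 ≤ e.2

/-- `e` covers the gap between points `k` and `k+1`. -/
def coversGap (e : Edge) (k : ℕ) : Prop := e.1 ≤ k ∧ k + 1 ≤ e.2

/-- Two edges cross: their endpoints interleave in the linear order. -/
def crosses (e f : Edge) : Prop :=
  (e.1 < f.1 ∧ f.1 < e.2 ∧ e.2 < f.2) ∨ (f.1 < e.1 ∧ e.1 < f.2 ∧ f.2 < e.2)

/-- The length of an edge. -/
def elen (e : Edge) : ℕ := e.2 - e.1

/-- The graph on the `n` points induced by an edge set. -/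
def graphOf (n : ℕ) (E : Finset Edge) : SimpleGraph (Fin n) :=
  SimpleGraph.fromRel (fun a b => ((a : ℕ), (b : ℕ)) ∈ E)

def ValidEdges (n : ℕ) (E : Finset Edge) : Prop := ∀ e ∈ E, e.1 < e.2 ∧ e.2 < n

def NonCrossing (E : Finset Edge) : Prop := ∀ e ∈ E, ∀ f ∈ E, ¬ crosses e f

/-- `E` is the edge set of a non-crossing spanning tree on the points `0, …, n-1`. -/
def IsNCSpanningTree (n : ℕ) (E : Finset Edge) : Prop :=
  ValidEdges n E ∧ NonCrossing E ∧ (graphOf n E).IsTree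

/-- `ρ` assigns to each gap `k` (with `k + 1 < n`) a shortest edge of `E` covering it. -/
def IsRho (n : ℕ) (E : Finset Edge) (ρ : ℕ → Edge) : Prop :=
  ∀ k, k + 1 < n →
    ρ k ∈ E ∧ coversGap (ρ k) k ∧ ∀ f ∈ E, coversGap f k → elen (ρ k) ≤ elen f

/-- `ρ` is a bijection from the gaps `{0, …, n-2}` onto `E`. -/
def RhoBij (n : ℕ) (E : Finset Edge) (ρ : ℕ → Edge) : Prop :=
  (∀ k l, k + 1 < n → l + 1 < n → ρ k = ρ l → k = l) ∧
  (∀ e ∈ E, ∃ k, k + 1 < n ∧ ρ k = e)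

/-- `e` is a short edge for the gap `k`. -/
def isShort (e : Edge) (k : ℕ) : Prop := e = (k, k + 1)

/-- `e` is a near edge for the gap `k`: it covers the gap and shares exactly one
endpoint with `{k, k+1}`. -/
def isNear (e : Edge) (k : ℕ) : Prop :=
  coversGap e k ∧ ((e.1 = k ∧ e.2 ≠ k + 1) ∨ (e.1 ≠ k ∧ e.2 = k + 1))

/-- `e` is a far edge for the gap `k`: it covers the gap and shares no endpoint
with `{k, k+1}`. -/
def isFar (e : Edge) (k : ℕ) : Prop := coversGap e k ∧ e.1 ≠ k ∧ e.2 ≠ k + 1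

/-- The edges of `E` not covered by any other edge of `E`. -/
noncomputable def Uncovered (E : Finset Edge) : Finset Edge :=
  E.filter (fun e => ∀ f ∈ E, f ≠ e → ¬ covers f e)

/-- Gap `i` is a near-near gap: the paired edges differ and are both near. -/
def NearNear (n : ℕ) (ρ ρ' : ℕ → Edge) (i : ℕ) : Prop :=
  i + 1 < n ∧ ρ i ≠ ρ' i ∧ isNear (ρ i) i ∧ isNear (ρ' i) i

/-- Directed edge `g_i → g_j` of the conflict graph `H(T,T')`. -/
def conflictEdge (ρ ρ' : ℕ → Edge) (i j : ℕ) : Prop :=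
  i ≠ j ∧
  (crosses (ρ i) (ρ' j) ∨
   (covers (ρ' j) (ρ i) ∧ coversGap (ρ i) j) ∨
   (covers (ρ i) (ρ' j) ∧ coversGap (ρ' j) i))

/-- The subgraph of the directed graph `R` induced on `S` has no directed cycle. -/
def AcyclicOn (R : ℕ → ℕ → Prop) (S : Set ℕ) : Prop :=
  ∀ a, ¬ Relation.TransGen (fun x y => x ∈ S ∧ y ∈ S ∧ R x y) a a

/-- Two edges are adjacent: they share an endpoint. -/
def adjEdges (e f : Edge) : Prop :=
  e.1 = f.1 ∨ e.1 = f.2 ∨ e.2 = f.1 ∨ e.2 = f.2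


/- Every gap `i ≠ j` is either common (`ρ i = ρ' i`) or near-near. For a common gap, `ρ i` and
`ρ' j` are both edges of `T'` and both shortest there over their gaps, which rules out each of the
three conflict patterns; for a near-near gap they are ruled out by hypothesis. With no conflict
into `g_j`, `e'_j` crosses no edge of `T - e_j`, every edge of `T - e_j` over `g_j` contains
`e'_j` (so `e'_j` is the new shortest edge over `g_j`), and `e'_j` contains every `ρ k` whose gap
it covers (so `ρ k` stays shortest over `g_k`).

What remains is that an edge set which is non-crossing and admits a bijective shortest-edge
assignment `ρ` is a spanning tree. It has `n - 1` edges, so connectivity suffices, and the points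
`k, k + 1` are connected by induction on the length of `ρ k`: every other gap under `ρ k` has a
strictly shorter shortest edge, nested inside `ρ k`. -/

open SimpleGraph

lemma crosses_comm {e f : Edge} : crosses e f ↔ crosses f e := by
  unfold crosses
  tauto

lemma not_crosses_self (e : Edge) : ¬ crosses e e := by
  unfold crosses
  omega

lemma covers_or_covers_of_not_crosses {e f : Edge} {k : ℕ} (he : coversGap e k)
    (hf : coversGap f k) (h : ¬ crosses e f) : covers e f ∨ covers f e := by
  simp only [coversGap, crosses, covers, not_or, not_and, not_lt] at *
  omega

lemma elen_le_of_covers {e f : Edge} (h : covers f e) : elen e ≤ elen f := by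
  simp only [covers, elen] at *
  omega

lemma elen_lt_of_covers {e f : Edge} (h : covers f e) (hne : f ≠ e) (he : e.1 ≤ e.2) :
    elen e < elen f := by
  obtain ⟨f₁, f₂⟩ := f
  obtain ⟨e₁, e₂⟩ := e
  simp only [covers, elen, ne_eq, Prod.mk.injEq] at *
  omega

lemma reachable_of_reachable_succ {n : ℕ} {G : SimpleGraph (Fin n)} {u v : ℕ} (huv : u ≤ v)
    (hv : v < n) (h : ∀ g (hg : g + 1 < n), u ≤ g → g < v → G.Reachable ⟨g, by omega⟩ ⟨g + 1, hg⟩) :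
    G.Reachable ⟨u, by omega⟩ ⟨v, hv⟩ := by
  induction v, huv using Nat.le_induction with
  | base => rfl
  | succ v huv ih =>
    exact (ih (by omega) fun g hg h₁ h₂ => h g hg h₁ (by omega)).trans (h v hv huv (by omega))

lemma connected_of_reachable_succ {n : ℕ} {G : SimpleGraph (Fin n)} (hn : 0 < n)
    (h : ∀ g (hg : g + 1 < n), G.Reachable ⟨g, by omega⟩ ⟨g + 1, hg⟩) : G.Connected := by
  have : Nonempty (Fin n) := ⟨⟨0, hn⟩⟩
  have hzero (x : Fin n) : G.Reachable ⟨0, hn⟩ x :=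
    reachable_of_reachable_succ (Nat.zero_le _) x.2 fun g hg _ _ => h g hg
  exact ⟨fun x y => (hzero x).symm.trans (hzero y)⟩

section EdgeSet

variable {n : ℕ} {E : Finset Edge} {ρ : ℕ → Edge}

lemma graphOf_adj (hv : ValidEdges n E) {f : Edge} (hf : f ∈ E) :
    (graphOf n E).Adj ⟨f.1, (hv f hf).1.trans (hv f hf).2⟩ ⟨f.2, (hv f hf).2⟩ := by
  rw [graphOf, fromRel_adj]
  exact ⟨by simpa [Fin.ext_iff] using (hv f hf).1.ne, Or.inl hf⟩

lemma card_edgeSet_graphOf (hv : ValidEdges n E) : Nat.card (graphOf n E).edgeSet = E.card := by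
  rw [Nat.card_coe_set_eq, ← Set.ncard_coe_finset]
  symm
  refine Set.ncard_congr (fun f hf => s(⟨f.1, (hv f hf).1.trans (hv f hf).2⟩, ⟨f.2, (hv f hf).2⟩))
    (fun f hf => graphOf_adj hv hf) ?_ ?_
  · intro f g hf hg hfg
    have := (hv f hf).1
    have := (hv g hg).1
    rcases Sym2.eq_iff.mp hfg with ⟨h₁, h₂⟩ | ⟨h₁, h₂⟩ <;> simp only [Fin.mk.injEq] at h₁ h₂
    · exact Prod.ext h₁ h₂
    · omega
  · intro b hb
    induction b using Sym2.ind with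
    | _ u v =>
      obtain ⟨-, huv | hvu⟩ := (fromRel_adj _ u v).mp (mem_edgeSet _ |>.mp hb)
      · exact ⟨(u, v), huv, rfl⟩
      · exact ⟨(v, u), hvu, Sym2.eq_swap⟩

lemma card_eq_of_rhoBij (hρ : IsRho n E ρ) (hbij : RhoBij n E ρ) : E.card = n - 1 := by
  have himage : E = (Finset.range (n - 1)).image ρ := by
    ext e
    simp only [Finset.mem_image, Finset.mem_range]
    constructor
    · rintro he
      obtain ⟨k, hk, rfl⟩ := hbij.2 e he
      exact ⟨k, by omega, rfl⟩
    · rintro ⟨k, hk, rfl⟩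
      exact (hρ k (by omega)).1
  rw [himage, Finset.card_image_of_injOn, Finset.card_range]
  intro k hk l hl hkl
  simp only [Finset.coe_range, Set.mem_Iio] at hk hl
  exact hbij.1 k l (by omega) (by omega) hkl

lemma not_coversGap_of_covers_rho (hv : ValidEdges n E) (hρ : IsRho n E ρ) (hbij : RhoBij n E ρ)
    {i k : ℕ} (hi : i + 1 < n) (hk : k + 1 < n) (hik : i ≠ k) (h : covers (ρ k) (ρ i)) :
    ¬ coversGap (ρ i) k := by
  intro hgap
  have hshort : elen (ρ k) ≤ elen (ρ i) := (hρ k hk).2.2 _ (hρ i hi).1 hgap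
  have hlt : elen (ρ i) < elen (ρ k) :=
    elen_lt_of_covers h (fun h' => hik (hbij.1 k i hk hi h').symm) (hv _ (hρ i hi).1).1.le
  omega

lemma elen_rho_lt_of_coversGap (hv : ValidEdges n E) (hnc : NonCrossing E) (hρ : IsRho n E ρ)
    (hbij : RhoBij n E ρ) {g k : ℕ} (hg : g + 1 < n) (hk : k + 1 < n) (hgk : g ≠ k)
    (hgap : coversGap (ρ k) g) : elen (ρ g) < elen (ρ k) := by
  rcases covers_or_covers_of_not_crosses (hρ g hg).2.1 hgap
      (hnc _ (hρ g hg).1 _ (hρ k hk).1) with h | h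
  · exact absurd hgap (not_coversGap_of_covers_rho hv hρ hbij hk hg hgk.symm h)
  · exact elen_lt_of_covers h (fun h' => hgk (hbij.1 k g hk hg h').symm)
      (hv _ (hρ g hg).1).1.le

lemma graphOf_reachable_succ (hv : ValidEdges n E) (hnc : NonCrossing E) (hρ : IsRho n E ρ)
    (hbij : RhoBij n E ρ) (k : ℕ) (hk : k + 1 < n) :
    (graphOf n E).Reachable ⟨k, by omega⟩ ⟨k + 1, hk⟩ := by
  induction hl : elen (ρ k) using Nat.strong_induction_on generalizing k with
  | _ l ih =>
  obtain ⟨hmem, ⟨ha, hb⟩, -⟩ := hρ k hk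
  have hunder (g : ℕ) (hg : g + 1 < n) (h₁ : (ρ k).1 ≤ g) (h₂ : g + 1 ≤ (ρ k).2) (hgk : g ≠ k) :
      (graphOf n E).Reachable ⟨g, by omega⟩ ⟨g + 1, hg⟩ :=
    ih _ (hl ▸ elen_rho_lt_of_coversGap hv hnc hρ hbij hg hk hgk ⟨h₁, h₂⟩) g hg rfl
  have hleft : (graphOf n E).Reachable ⟨(ρ k).1, by omega⟩ ⟨k, by omega⟩ :=
    reachable_of_reachable_succ ha (by omega) fun g hg h₁ h₂ =>
      hunder g hg h₁ (by omega) (by omega)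
  have hright : (graphOf n E).Reachable ⟨k + 1, hk⟩ ⟨(ρ k).2, (hv _ hmem).2⟩ :=
    reachable_of_reachable_succ hb (hv _ hmem).2 fun g hg h₁ h₂ =>
      hunder g hg (by omega) (by omega) (by omega)
  exact hleft.symm.trans ((graphOf_adj hv hmem).reachable.trans hright.symm)

theorem isNCSpanningTree_of_rho (hn : 0 < n) (hv : ValidEdges n E) (hnc : NonCrossing E)
    (hρ : IsRho n E ρ) (hbij : RhoBij n E ρ) : IsNCSpanningTree n E := by
  refine ⟨hv, hnc, isTree_iff_connected_and_card.mpr ⟨?_, ?_⟩⟩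
  · exact connected_of_reachable_succ hn (graphOf_reachable_succ hv hnc hρ hbij)
  · rw [card_edgeSet_graphOf hv, card_eq_of_rhoBij hρ hbij, Nat.card_eq_fintype_card,
      Fintype.card_fin]
    omega

end EdgeSet

section Flip

variable {n : ℕ} {T : Finset Edge} {ρ ρ' : ℕ → Edge} {j : ℕ}

lemma exists_gap_of_mem_erase (hbij : RhoBij n T ρ) {f : Edge} (hf : f ∈ T.erase (ρ j)) :
    ∃ i, i + 1 < n ∧ i ≠ j ∧ ρ i = f := by
  obtain ⟨i, hi, rfl⟩ := hbij.2 f (Finset.mem_of_mem_erase hf)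
  exact ⟨i, hi, fun hij => Finset.ne_of_mem_erase hf (hij ▸ rfl), rfl⟩

lemma rhoBij_flip (hρ : IsRho n T ρ) (hbij : RhoBij n T ρ) (hj : j + 1 < n) {e : Edge}
    (he : e ∉ T) : RhoBij n (insert e (T.erase (ρ j))) (Function.update ρ j e) := by
  have hne (k : ℕ) (hk : k + 1 < n) : ρ k ≠ e := fun h => he (h ▸ (hρ k hk).1)
  constructor
  · intro k l hk hl hkl
    by_cases hkj : k = j <;> by_cases hlj : l = j
    · rw [hkj, hlj]
    · subst hkj
      rw [Function.update_self, Function.update_of_ne hlj] at hkl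
      exact absurd hkl.symm (hne l hl)
    · subst hlj
      rw [Function.update_self, Function.update_of_ne hkj] at hkl
      exact absurd hkl (hne k hk)
    · rw [Function.update_of_ne hkj, Function.update_of_ne hlj] at hkl
      exact hbij.1 k l hk hl hkl
  · intro f hf
    rcases Finset.mem_insert.mp hf with rfl | hf
    · exact ⟨j, hj, Function.update_self _ _ _⟩
    · obtain ⟨k, hk, hkj, rfl⟩ := exists_gap_of_mem_erase hbij hf
      exact ⟨k, hk, Function.update_of_ne hkj _ _⟩

lemma not_crosses_of_mem_erase (hbij : RhoBij n T ρ)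
    (hfree : ∀ i, i + 1 < n → ¬ conflictEdge ρ ρ' i j) {f : Edge} (hf : f ∈ T.erase (ρ j)) :
    ¬ crosses f (ρ' j) := by
  obtain ⟨i, hi, hij, rfl⟩ := exists_gap_of_mem_erase hbij hf
  exact fun h => hfree i hi ⟨hij, Or.inl h⟩

lemma notMem_of_forall_not_conflictEdge (hbij : RhoBij n T ρ)
    (hfree : ∀ i, i + 1 < n → ¬ conflictEdge ρ ρ' i j) (hne : ρ j ≠ ρ' j)
    (hgap : coversGap (ρ' j) j) : ρ' j ∉ T := by
  intro hmem
  obtain ⟨i, hi, hie⟩ := hbij.2 _ hmem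
  have hij : i ≠ j := fun hij => hne (hij ▸ hie)
  refine hfree i hi ⟨hij, Or.inr (Or.inl ⟨?_, ?_⟩)⟩ <;> rw [hie]
  · exact ⟨le_rfl, le_rfl⟩
  · exact hgap

lemma nonCrossing_flip (hnc : NonCrossing T) (hbij : RhoBij n T ρ)
    (hfree : ∀ i, i + 1 < n → ¬ conflictEdge ρ ρ' i j) :
    NonCrossing (insert (ρ' j) (T.erase (ρ j))) := by
  intro f hf g hg
  rcases Finset.mem_insert.mp hf with rfl | hf <;> rcases Finset.mem_insert.mp hg with rfl | hg
  · exact not_crosses_self _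
  · exact fun h => not_crosses_of_mem_erase hbij hfree hg (crosses_comm.mp h)
  · exact not_crosses_of_mem_erase hbij hfree hf
  · exact hnc _ (Finset.mem_of_mem_erase hf) _ (Finset.mem_of_mem_erase hg)

lemma isRho_flip (hρ : IsRho n T ρ) (hbij : RhoBij n T ρ) (hj : j + 1 < n)
    (hgap : coversGap (ρ' j) j) (hfree : ∀ i, i + 1 < n → ¬ conflictEdge ρ ρ' i j) :
    IsRho n (insert (ρ' j) (T.erase (ρ j))) (Function.update ρ j (ρ' j)) := by
  intro k hk
  by_cases hkj : k = j
  · subst hkj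
    rw [Function.update_self]
    refine ⟨Finset.mem_insert_self _ _, hgap, fun f hf hfk => ?_⟩
    rcases Finset.mem_insert.mp hf with rfl | hf
    · exact le_rfl
    · obtain ⟨i, hi, hik, rfl⟩ := exists_gap_of_mem_erase hbij hf
      rcases covers_or_covers_of_not_crosses hfk hgap
          (not_crosses_of_mem_erase hbij hfree hf) with h | h
      · exact elen_le_of_covers h
      · exact absurd ⟨hik, Or.inr (Or.inl ⟨h, hfk⟩)⟩ (hfree i hi)
  · rw [Function.update_of_ne hkj]
    obtain ⟨hmem, hkgap, hmin⟩ := hρ k hk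
    have hkT : ρ k ∈ T.erase (ρ j) :=
      Finset.mem_erase.mpr ⟨fun h => hkj (hbij.1 k j hk hj h), hmem⟩
    refine ⟨Finset.mem_insert_of_mem hkT, hkgap, fun f hf hfk => ?_⟩
    rcases Finset.mem_insert.mp hf with rfl | hf
    · rcases covers_or_covers_of_not_crosses hkgap hfk
          (not_crosses_of_mem_erase hbij hfree hkT) with h | h
      · exact absurd ⟨hkj, Or.inr (Or.inr ⟨h, hfk⟩)⟩ (hfree k hk)
      · exact elen_le_of_covers h
    · exact hmin f (Finset.mem_of_mem_erase hf) hfk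

theorem flip_of_forall_not_conflictEdge (hv : ValidEdges n T) (hnc : NonCrossing T)
    (hρ : IsRho n T ρ) (hbij : RhoBij n T ρ) (hj : j + 1 < n) (hne : ρ j ≠ ρ' j)
    (hgap : coversGap (ρ' j) j) (hlt : (ρ' j).2 < n)
    (hfree : ∀ i, i + 1 < n → ¬ conflictEdge ρ ρ' i j) :
    IsNCSpanningTree n (insert (ρ' j) (T.erase (ρ j))) ∧
    IsRho n (insert (ρ' j) (T.erase (ρ j))) (Function.update ρ j (ρ' j)) ∧
    RhoBij n (insert (ρ' j) (T.erase (ρ j))) (Function.update ρ j (ρ' j)) := by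
  have hvalid : ValidEdges n (insert (ρ' j) (T.erase (ρ j))) := by
    intro f hf
    rcases Finset.mem_insert.mp hf with rfl | hf
    · exact ⟨by unfold coversGap at hgap; omega, hlt⟩
    · exact hv f (Finset.mem_of_mem_erase hf)
  have hρflip := isRho_flip hρ hbij hj hgap hfree
  have hbijflip :=
    rhoBij_flip hρ hbij hj (notMem_of_forall_not_conflictEdge hbij hfree hne hgap)
  exact ⟨isNCSpanningTree_of_rho (by omega) hvalid (nonCrossing_flip hnc hbij hfree) hρflip
    hbijflip, hρflip, hbijflip⟩

end Flip

lemma not_conflictEdge_of_eq {n : ℕ} {T' : Finset Edge} {ρ ρ' : ℕ → Edge} {i j : ℕ}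
    (hv' : ValidEdges n T') (hnc' : NonCrossing T') (hρ' : IsRho n T' ρ')
    (hbij' : RhoBij n T' ρ') (hi : i + 1 < n) (hj : j + 1 < n) (hc : ρ i = ρ' i) :
    ¬ conflictEdge ρ ρ' i j := by
  rintro ⟨hij, hcr | ⟨hcov, hgap⟩ | ⟨hcov, hgap⟩⟩ <;> rw [hc] at *
  · exact hnc' _ (hρ' i hi).1 _ (hρ' j hj).1 hcr
  · exact not_coversGap_of_covers_rho hv' hρ' hbij' hi hj hij hcov hgap
  · exact not_coversGap_of_covers_rho hv' hρ' hbij' hj hi (Ne.symm hij) hcov hgap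

/-- if the set of pairs `Π_R` is empty (every gap is either a
common-edge gap or a near-near gap) and the near-near gap `g_j` has no incoming
edge in the conflict graph `H(T,T')`, then the direct flip `e_j → e'_j` is
valid: it yields a non-crossing spanning tree in which every other edge keeps
its associated gap (and hence its type). -/
theorem stmt19 (n : ℕ) (T T' : Finset Edge) (ρ ρ' : ℕ → Edge) (j : ℕ)
    (hT : IsNCSpanningTree n T) (hT' : IsNCSpanningTree n T')
    (hρ : IsRho n T ρ) (hbij : RhoBij n T ρ)
    (hρ' : IsRho n T' ρ') (hbij' : RhoBij n T' ρ')
    (hR : ∀ k, k + 1 < n → ρ k = ρ' k ∨ NearNear n ρ ρ' k)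
    (hj : NearNear n ρ ρ' j)
    (hin : ∀ i, i ≠ j → NearNear n ρ ρ' i → ¬ conflictEdge ρ ρ' i j) :
    IsNCSpanningTree n (insert (ρ' j) (T.erase (ρ j))) ∧
    IsRho n (insert (ρ' j) (T.erase (ρ j))) (Function.update ρ j (ρ' j)) ∧
    RhoBij n (insert (ρ' j) (T.erase (ρ j))) (Function.update ρ j (ρ' j)) := by
  obtain ⟨hjn, hne, -, -⟩ := hj
  obtain ⟨hmem', hgap', -⟩ := hρ' j hjn
  refine flip_of_forall_not_conflictEdge hT.1 hT.2.1 hρ hbij hjn hne hgap' (hT'.1 _ hmem').2 ?_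
  intro i hi hconf
  rcases hR i hi with hc | hnn
  · exact not_conflictEdge_of_eq hT'.1 hT'.2.1 hρ' hbij' hi hjn hc hconf
  · exact hin i hconf.1 hnn hconf

end NCST
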